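/- arXiv:2412.02807 — 7 statements merged into one kernel-verified Lean document; each statement's English description precedes it below -/
import Mathlib

section
/- Let X ⊆ ℝⁿ, let f, f̂ : ℝⁿ → ℝⁿ be Lipschitz on X with constants K_f and K_f̂ respectively, and let V : ℝⁿ → ℝ be continuously differentiable with ‖∇V(x)‖ ≤ ν for all x ∈ X. Let Y ⊆ X be a finite set such that for every z ∈ X there exists y ∈ Y with ‖z − y‖ < δ, and suppose ‖f(y) − f̂(y)‖ ≤ α for every y ∈ Y. Let 0 < c₁ < c₂ and β > ν·((K_f + K_f̂)·δ + α) > 0 be such that ⟨∇V(x), f̂(x)⟩ ≤ −β for every x ∈ X with c₁ ≤ V(x) ≤ c₂. Write Ω_c = {x ∈ X : V(x) ≤ c}. Suppose Ω_{c₂} is compact and contained in the interior of X, and suppose there is a set O with Ω_{c₁} ⊆ O ⊆ X such that every solution of ẋ = f(x) starting in O remains in O for all t ≥ 0 and converges to the origin as t → ∞. Then every solution x(·) of ẋ = f(x) with x(0) ∈ Ω_{c₂} satisfies x(t) ∈ Ω_{c₂} for all t ≥ 0 and x(t) → 0 as t → ∞; that is, Ω_{c₂} is a region of attraction for ẋ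 = f(x). -/
/-!
Comparing f and f̂ with their values at a nearby sample point gives ‖f − f̂‖ ≤ (K_f + K_f̂)δ + α
on X, so by Cauchy–Schwarz V decreases along solutions of ẋ = f(x) at rate at least
ε = β − ν((K_f + K_f̂)δ + α) > 0 wherever c₁ ≤ V ≤ c₂. As Ω_{c₂} is closed and lies in the interior
of X, a solution could only leave it through the level V = c₂, where V is strictly decreasing;
so Ω_{c₂} is forward invariant. Inside Ω_{c₂} \ Ω_{c₁} the value of V drops at rate ε, so the
solution reaches Ω_{c₁} ⊆ O after time at most (V(x(0)) − c₁)/ε and then converges to the origin.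
-/

open Filter Topology

section Lipschitz

variable {E F : Type*} [SeminormedAddCommGroup F] {X : Set E} {g : E → F} {K : ℝ}

theorem nonneg_of_norm_sub_le_mul_norm_sub_of_mem_interior [NormedAddCommGroup E]
    [NormedSpace ℝ E] [Nontrivial E] {x : E} (hx : x ∈ interior X)
    (hg : ∀ a ∈ X, ∀ b ∈ X, ‖g a - g b‖ ≤ K * ‖a - b‖) : 0 ≤ K := by
  obtain ⟨y, hyX, hyx⟩ : ∃ y ∈ X, y ≠ x :=
    ((eventually_nhdsWithin_of_eventually_nhds (mem_interior_iff_mem_nhds.mp hx)).and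
      (self_mem_nhdsWithin (s := {x}ᶜ))).exists
  exact nonneg_of_mul_nonneg_left ((norm_nonneg _).trans (hg x (interior_subset hx) y hyX))
    (norm_pos_iff.mpr (sub_ne_zero.mpr hyx.symm))

theorem norm_sub_le_of_approx_on_net [SeminormedAddCommGroup E] {f : E → F} {Y : Set E}
    {Kf Kg δ α : ℝ} (hKf : 0 ≤ Kf) (hKg : 0 ≤ Kg)
    (hf : ∀ a ∈ X, ∀ b ∈ X, ‖f a - f b‖ ≤ Kf * ‖a - b‖)
    (hg : ∀ a ∈ X, ∀ b ∈ X, ‖g a - g b‖ ≤ Kg * ‖a - b‖) (hYX : Y ⊆ X)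
    (hcover : ∀ z ∈ X, ∃ y ∈ Y, ‖z - y‖ < δ) (herr : ∀ y ∈ Y, ‖f y - g y‖ ≤ α)
    {x : E} (hx : x ∈ X) : ‖f x - g x‖ ≤ (Kf + Kg) * δ + α := by
  obtain ⟨y, hyY, hxy⟩ := hcover x hx
  have hyX := hYX hyY
  calc ‖f x - g x‖ ≤ ‖f x - f y‖ + ‖f y - g y‖ + ‖g y - g x‖ := by
        simpa using norm_add₃_le (a := f x - f y) (b := f y - g y) (c := g y - g x)
    _ ≤ Kf * ‖x - y‖ + α + Kg * ‖x - y‖ := by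
        gcongr
        · exact hf x hx y hyX
        · exact herr y hyY
        · rw [norm_sub_rev x y]; exact hg y hyX x hx
    _ ≤ (Kf + Kg) * δ + α := by nlinarith

end Lipschitz

section Gradient

variable {F : Type*} [NormedAddCommGroup F] [InnerProductSpace ℝ F]

theorem real_inner_le_of_norm_sub_le {w u v : F} {ν e β : ℝ} (hu : inner ℝ w u ≤ -β)
    (hw : ‖w‖ ≤ ν) (hvu : ‖v - u‖ ≤ e) : inner ℝ w v ≤ ν * e - β := by
  have hsplit : inner ℝ w v = inner ℝ w u + inner ℝ w (v - u) := by
    rw [← inner_add_right, add_sub_cancel]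
  have hcs : inner ℝ w (v - u) ≤ ν * e :=
    (real_inner_le_norm w _).trans
      (mul_le_mul hw hvu (norm_nonneg _) ((norm_nonneg w).trans hw))
  linarith

theorem HasGradientAt.comp_hasDerivAt [CompleteSpace F] {V : F → ℝ} {w : F} {γ : ℝ → F}
    {v : F} {t : ℝ} (hV : HasGradientAt V w (γ t)) (hγ : HasDerivAt γ v t) :
    HasDerivAt (V ∘ γ) (inner ℝ w v) t := by
  simpa using hV.hasFDerivAt.comp_hasDerivAt t hγ

end Gradient

theorem HasDerivAt.eventually_nhdsGT_lt {g : ℝ → ℝ} {g' t : ℝ} (hg : HasDerivAt g g' t)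
    (hg' : g' < 0) : ∀ᶠ s in 𝓝[>] t, g s < g t := by
  have hslope : Tendsto (slope g t) (𝓝[>] t) (𝓝 g') :=
    (hasDerivAt_iff_tendsto_slope.mp hg).mono_left (nhdsWithin_mono _ fun _ hs => ne_of_gt hs)
  filter_upwards [hslope.eventually_lt_const hg', self_mem_nhdsWithin] with s hs hts
  exact (slope_neg_iff_of_le (le_of_lt hts)).mp hs

theorem exists_le_of_hasDerivAt_le_neg {W W' : ℝ → ℝ} {a ε : ℝ} (hε : 0 < ε)
    (hW : ∀ t ≥ 0, HasDerivAt W (W' t) t) (hW' : ∀ t ≥ 0, a < W t → W' t ≤ -ε) :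
    ∃ t ≥ 0, W t ≤ a := by
  by_contra! hgt
  set T := (W 0 - a) / ε
  have hT : 0 ≤ T := div_nonneg (sub_nonneg.mpr (hgt 0 le_rfl).le) hε.le
  have hB : ∀ t, HasDerivAt (fun s => W 0 - ε * s) (-ε) t := fun t => by
    simpa using ((hasDerivAt_id t).const_mul ε).const_sub (W 0)
  have hdecay : W T ≤ W 0 - ε * T :=
    image_le_of_deriv_right_le_deriv_boundary (a := 0) (b := T) (B := fun s => W 0 - ε * s)
      (fun t ht => (hW t ht.1).continuousAt.continuousWithinAt)
      (fun t ht => (hW t ht.1).hasDerivWithinAt) (by simp)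
      (fun t _ => (hB t).continuousAt.continuousWithinAt) (fun t _ => (hB t).hasDerivWithinAt)
      (fun t ht => hW' t ht.1 (hgt t ht.1)) ⟨hT, le_rfl⟩
  have : ε * T = W 0 - a := mul_div_cancel₀ _ hε.ne'
  linarith [hgt T hT]

theorem forall_mem_sublevel_of_hasDerivAt_neg_on_level {E : Type*} [TopologicalSpace E]
    {γ : ℝ → E} {V : E → ℝ} {W' : ℝ → ℝ} {U : Set E} {c : ℝ} (hU : IsOpen U)
    (hclosed : IsClosed {x ∈ U | V x ≤ c}) (hγ : ∀ t ≥ 0, ContinuousAt γ t)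
    (hW : ∀ t ≥ 0, γ t ∈ U → HasDerivAt (V ∘ γ) (W' t) t)
    (hW' : ∀ t ≥ 0, γ t ∈ U → V (γ t) = c → W' t < 0) (h0 : γ 0 ∈ {x ∈ U | V x ≤ c}) :
    ∀ t ≥ 0, γ t ∈ {x ∈ U | V x ≤ c} := by
  intro T hT
  refine IsClosed.Icc_subset_of_forall_mem_nhdsWithin (s := γ ⁻¹' {x ∈ U | V x ≤ c})
    ?_ h0 ?_ ⟨hT, le_rfl⟩
  · rw [Set.inter_comm]
    exact ContinuousOn.preimage_isClosed_of_isClosed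
      (fun t ht => (hγ t ht.1).continuousWithinAt) isClosed_Icc hclosed
  · rintro t ⟨⟨htU, htc⟩, ht, -⟩
    have hnear : ∀ᶠ s in 𝓝[>] t, γ s ∈ U :=
      nhdsWithin_le_nhds ((hγ t ht).preimage_mem_nhds (hU.mem_nhds htU))
    have hbelow : ∀ᶠ s in 𝓝[>] t, V (γ s) ≤ c := by
      rcases htc.lt_or_eq with hlt | heq
      · exact nhdsWithin_le_nhds <|
          ((hW t ht htU).continuousAt.eventually_lt continuousAt_const hlt).mono fun _ => le_of_lt
      · filter_upwards [(hW t ht htU).eventually_nhdsGT_lt (hW' t ht htU heq)] with s hs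
        exact heq ▸ hs.le
    filter_upwards [hnear, hbelow] with s hsU hsc using ⟨hsU, hsc⟩

theorem sublevel_set_is_region_of_attraction_general {n : ℕ}
    (X : Set (EuclideanSpace ℝ (Fin n)))
    (f fhat : EuclideanSpace ℝ (Fin n) → EuclideanSpace ℝ (Fin n))
    (Kf Kfhat ν δ α β c₁ c₂ : ℝ)
    (hf : ∀ a ∈ X, ∀ b ∈ X, ‖f a - f b‖ ≤ Kf * ‖a - b‖)
    (hfhat : ∀ a ∈ X, ∀ b ∈ X, ‖fhat a - fhat b‖ ≤ Kfhat * ‖a - b‖)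
    (V : EuclideanSpace ℝ (Fin n) → ℝ) (hV : ContDiff ℝ 1 V)
    (hgrad : ∀ x ∈ X, ‖gradient V x‖ ≤ ν)
    (Y : Finset (EuclideanSpace ℝ (Fin n))) (hYX : ↑Y ⊆ X)
    (hcover : ∀ z ∈ X, ∃ y ∈ Y, ‖z - y‖ < δ)
    (herr : ∀ y ∈ Y, ‖f y - fhat y‖ ≤ α)
    (hc₁₂ : c₁ < c₂)
    (hβ : ν * ((Kf + Kfhat) * δ + α) < β)
    (hVdot : ∀ x ∈ X, c₁ ≤ V x → V x ≤ c₂ → inner ℝ (gradient V x) (fhat x) ≤ -β)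
    (hcompact : IsCompact {x ∈ X | V x ≤ c₂})
    (hinterior : {x ∈ X | V x ≤ c₂} ⊆ interior X)
    (O : Set (EuclideanSpace ℝ (Fin n)))
    (hO₁ : {x ∈ X | V x ≤ c₁} ⊆ O)
    (hOattr : ∀ sol : ℝ → EuclideanSpace ℝ (Fin n),
      (∀ t ≥ (0 : ℝ), HasDerivAt sol (f (sol t)) t) → sol 0 ∈ O →
      (∀ t ≥ (0 : ℝ), sol t ∈ O) ∧ Tendsto sol atTop (𝓝 0)) :
    ∀ sol : ℝ → EuclideanSpace ℝ (Fin n),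
      (∀ t ≥ (0 : ℝ), HasDerivAt sol (f (sol t)) t) →
      sol 0 ∈ {x ∈ X | V x ≤ c₂} →
      (∀ t ≥ (0 : ℝ), sol t ∈ {x ∈ X | V x ≤ c₂}) ∧ Tendsto sol atTop (𝓝 0) := by
  intro sol hsol hsol0
  rcases subsingleton_or_nontrivial (EuclideanSpace ℝ (Fin n)) with hE | hE
  · exact ⟨fun t _ => Subsingleton.elim (sol 0) (sol t) ▸ hsol0,
      tendsto_const_nhds.congr fun _ => Subsingleton.elim _ _⟩
  have hdecr : ∀ x ∈ X, c₁ ≤ V x → V x ≤ c₂ →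
      inner ℝ (gradient V x) (f x) ≤ ν * ((Kf + Kfhat) * δ + α) - β := fun x hx h₁ h₂ =>
    real_inner_le_of_norm_sub_le (hVdot x hx h₁ h₂) (hgrad x hx) <| norm_sub_le_of_approx_on_net
      (nonneg_of_norm_sub_le_mul_norm_sub_of_mem_interior (hinterior hsol0) hf)
      (nonneg_of_norm_sub_le_mul_norm_sub_of_mem_interior (hinterior hsol0) hfhat)
      hf hfhat hYX hcover herr hx
  have hderiv : ∀ t ≥ 0, HasDerivAt (V ∘ sol) (inner ℝ (gradient V (sol t)) (f (sol t))) t :=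
    fun t ht => ((hV.differentiable one_ne_zero) _).hasGradientAt.comp_hasDerivAt (hsol t ht)
  have hinv : ∀ t ≥ 0, sol t ∈ {x ∈ X | V x ≤ c₂} := by
    have hΩ : {x ∈ X | V x ≤ c₂} = {x ∈ interior X | V x ≤ c₂} :=
      subset_antisymm (fun x hx => ⟨hinterior hx, hx.2⟩) fun x hx => ⟨interior_subset hx.1, hx.2⟩
    rw [hΩ] at hsol0 hcompact ⊢
    refine forall_mem_sublevel_of_hasDerivAt_neg_on_level isOpen_interior hcompact.isClosed
      (fun t ht => (hsol t ht).continuousAt) (fun t ht _ => hderiv t ht) ?_ hsol0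
    intro t ht hX hlevel
    linarith [hdecr _ (interior_subset hX) (hlevel ▸ hc₁₂.le) hlevel.le]
  obtain ⟨t₀, ht₀, hreach⟩ := exists_le_of_hasDerivAt_le_neg (sub_pos.mpr hβ) hderiv
    fun t ht hlt => by linarith [hdecr _ (hinv t ht).1 hlt.le (hinv t ht).2]
  have hconv := hOattr (fun s => sol (s + t₀))
    (fun t ht => (hsol (t + t₀) (by linarith)).comp_add_const t t₀)
    (by simpa using hO₁ ⟨(hinv t₀ ht₀).1, hreach⟩)
  refine ⟨hinv, ?_⟩
  rw [← map_add_atTop_eq t₀, tendsto_map'_iff]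
  exact hconv.2

theorem sublevel_set_is_region_of_attraction {n : ℕ}
    (X : Set (EuclideanSpace ℝ (Fin n)))
    (f fhat : EuclideanSpace ℝ (Fin n) → EuclideanSpace ℝ (Fin n))
    (Kf Kfhat ν δ α β c₁ c₂ : ℝ)
    (hf : ∀ a ∈ X, ∀ b ∈ X, ‖f a - f b‖ ≤ Kf * ‖a - b‖)
    (hfhat : ∀ a ∈ X, ∀ b ∈ X, ‖fhat a - fhat b‖ ≤ Kfhat * ‖a - b‖)
    (V : EuclideanSpace ℝ (Fin n) → ℝ) (hV : ContDiff ℝ 1 V)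
    (hgrad : ∀ x ∈ X, ‖gradient V x‖ ≤ ν)
    (Y : Finset (EuclideanSpace ℝ (Fin n))) (hYX : ↑Y ⊆ X)
    (hcover : ∀ z ∈ X, ∃ y ∈ Y, ‖z - y‖ < δ)
    (herr : ∀ y ∈ Y, ‖f y - fhat y‖ ≤ α)
    (hc₁ : 0 < c₁) (hc₁₂ : c₁ < c₂)
    (hβpos : 0 < ν * ((Kf + Kfhat) * δ + α))
    (hβ : ν * ((Kf + Kfhat) * δ + α) < β)
    (hVdot : ∀ x ∈ X, c₁ ≤ V x → V x ≤ c₂ → inner ℝ (gradient V x) (fhat x) ≤ -β)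
    (hcompact : IsCompact {x ∈ X | V x ≤ c₂})
    (hinterior : {x ∈ X | V x ≤ c₂} ⊆ interior X)
    (O : Set (EuclideanSpace ℝ (Fin n)))
    (hO₁ : {x ∈ X | V x ≤ c₁} ⊆ O) (hO₂ : O ⊆ X)
    (hOattr : ∀ sol : ℝ → EuclideanSpace ℝ (Fin n),
      (∀ t ≥ (0 : ℝ), HasDerivAt sol (f (sol t)) t) → sol 0 ∈ O →
      (∀ t ≥ (0 : ℝ), sol t ∈ O) ∧ Tendsto sol atTop (𝓝 0)) :
    ∀ sol : ℝ → EuclideanSpace ℝ (Fin n),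
      (∀ t ≥ (0 : ℝ), HasDerivAt sol (f (sol t)) t) →
      sol 0 ∈ {x ∈ X | V x ≤ c₂} →
      (∀ t ≥ (0 : ℝ), sol t ∈ {x ∈ X | V x ≤ c₂}) ∧ Tendsto sol atTop (𝓝 0) :=
  sublevel_set_is_region_of_attraction_general X f fhat Kf Kfhat ν δ α β c₁ c₂ hf hfhat V hV hgrad Y
    hYX hcover herr hc₁₂ hβ hVdot hcompact hinterior O hO₁ hOattr
end

section
/- Let E be a real Banach space and let u : ℝ → E be continuous on [0, ∞) with ‖u(t)‖ ≤ C·e^{ω t} for all t ≥ 0, where C ≥ 0 and ω ≥ 0. Then λ·∫₀^∞ e^{−λ t} u(t) dt converges to u(0) as λ → ∞; i.e., the map λ ↦ λ·∫₀^∞ e^{−λ t} u(t) dt tends to u(0) along the filter atTop. -/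
open MeasureTheory Filter Topology

theorem yosida_strong_convergence
    {E : Type*} [NormedAddCommGroup E] [NormedSpace ℝ E] [CompleteSpace E]
    (u : ℝ → E) (C ω : ℝ) (hC : 0 ≤ C) (hω : 0 ≤ ω)
    (hu : ContinuousOn u (Set.Ici 0))
    (hbound : ∀ t ≥ (0 : ℝ), ‖u t‖ ≤ C * Real.exp (ω * t)) :
    Tendsto (fun lam : ℝ => lam • ∫ t in Set.Ici (0 : ℝ), Real.exp (-lam * t) • u t)
      atTop (𝓝 (u 0)) := by
  have key : Tendsto (fun lam : ℝ => ∫ s in Set.Ici (0:ℝ), Real.exp (-s) • u (s / lam))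
      atTop (𝓝 (u 0)) := by
    have hint : (∫ s in Set.Ici (0:ℝ), Real.exp (-s) • u 0) = u 0 := by
      rw [integral_smul_const, MeasureTheory.integral_Ici_eq_integral_Ioi,
        integral_exp_neg_Ioi_zero, one_smul]
    rw [← hint]
    apply tendsto_integral_filter_of_dominated_convergence
      (bound := fun s => C * Real.exp (-(1/2) * s))
    · filter_upwards [eventually_gt_atTop (0:ℝ)] with lam hlam
      apply ContinuousOn.aestronglyMeasurable _ measurableSet_Ici
      apply ContinuousOn.smul ((Real.continuous_exp.comp continuous_neg).continuousOn)
      exact hu.comp (continuous_id.div_const lam).continuousOn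
        (fun s hs => div_nonneg hs hlam.le)
    · filter_upwards [eventually_ge_atTop (max (2*ω) 1)] with lam hlam
      rw [ae_restrict_iff' measurableSet_Ici]
      filter_upwards with s hs
      have hlam1 : (1:ℝ) ≤ lam := le_trans (le_max_right _ _) hlam
      have hlam2 : 2*ω ≤ lam := le_trans (le_max_left _ _) hlam
      have hlam0 : (0:ℝ) < lam := lt_of_lt_of_le one_pos hlam1
      rw [norm_smul, Real.norm_eq_abs, abs_of_pos (Real.exp_pos _)]
      have h2 : ‖u (s/lam)‖ ≤ C * Real.exp (ω * (s/lam)) :=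
        hbound _ (div_nonneg hs hlam0.le)
      calc Real.exp (-s) * ‖u (s/lam)‖
          ≤ Real.exp (-s) * (C * Real.exp (ω * (s/lam))) :=
            mul_le_mul_of_nonneg_left h2 (Real.exp_pos _).le
        _ = C * Real.exp (-s + ω * (s/lam)) := by rw [Real.exp_add]; ring
        _ ≤ C * Real.exp (-(1/2)*s) := by
            apply mul_le_mul_of_nonneg_left _ hC
            apply Real.exp_le_exp.mpr
            have hω2 : ω * (s/lam) ≤ s/2 := by
              rw [mul_div_assoc', div_le_div_iff₀ hlam0 two_pos]
              nlinarith [mul_le_mul_of_nonneg_right hlam2 hs]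
            linarith
    · apply Integrable.const_mul
      rw [← IntegrableOn, integrableOn_Ici_iff_integrableOn_Ioi]
      exact exp_neg_integrableOn_Ioi 0 (by norm_num)
    · rw [ae_restrict_iff' measurableSet_Ici]
      filter_upwards with s hs
      apply Filter.Tendsto.const_smul
      have h0 : Tendsto (fun lam : ℝ => s / lam) atTop (𝓝[Set.Ici 0] 0) := by
        rw [tendsto_nhdsWithin_iff]
        refine ⟨Tendsto.div_atTop tendsto_const_nhds tendsto_id, ?_⟩
        filter_upwards [eventually_gt_atTop (0:ℝ)] with lam hlam
        exact div_nonneg hs hlam.le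
      exact ((hu 0 (Set.self_mem_Ici)).tendsto).comp h0
  apply key.congr'
  filter_upwards [eventually_gt_atTop (0:ℝ)] with lam hlam
  set g : ℝ → E := Set.indicator (Set.Ici 0) (fun t => Real.exp (-lam*t) • u t) with hg
  have h1 : (∫ t in Set.Ici (0:ℝ), Real.exp (-lam*t) • u t) = ∫ t, g t := by
    rw [hg, integral_indicator measurableSet_Ici]
  have h2 : ∀ s : ℝ, g (s/lam) =
      Set.indicator (Set.Ici 0) (fun s => Real.exp (-s) • u (s/lam)) s := by
    intro s
    simp only [hg, Set.indicator_apply, Set.mem_Ici]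
    rcases le_or_gt 0 s with hs | hs
    · rw [if_pos hs, if_pos (div_nonneg hs hlam.le)]
      congr 2
      field_simp
    · rw [if_neg (not_le.mpr hs), if_neg (not_le.mpr (div_neg_of_neg_of_pos hs hlam))]
  have h3 : (∫ s, g (s/lam)) = |lam| • ∫ t, g t := Measure.integral_comp_div g lam
  calc (∫ s in Set.Ici (0:ℝ), Real.exp (-s) • u (s/lam))
      = ∫ s, Set.indicator (Set.Ici 0) (fun s => Real.exp (-s) • u (s/lam)) s := by
        rw [integral_indicator measurableSet_Ici]
    _ = ∫ s, g (s/lam) := by simp_rw [h2]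
    _ = |lam| • ∫ t, g t := h3
    _ = lam • ∫ t in Set.Ici (0:ℝ), Real.exp (-lam*t) • u t := by
        rw [abs_of_pos hlam, h1]
end

section
/- (Lyapunov's theorem.) Let D ⊆ ℝⁿ be an open set containing the origin, let f : ℝⁿ → ℝⁿ be locally Lipschitz with f(0) = 0, and let V : ℝⁿ → ℝ be continuously differentiable on D with V(0) = 0, V(x) > 0 for all x ∈ D \ {0}, and ⟨∇V(x), f(x)⟩ < 0 for all x ∈ D \ {0}. Then the origin is asymptotically stable: (i) for every ε > 0 there exists δ > 0 such that every solution x(·) of ẋ = f(x) with ‖x(0)‖ < δ satisfies ‖x(t)‖ < ε for all t ≥ 0, and (ii) there exists δ₀ > 0 such that every solution x(·) of ẋ = f(x) with ‖x(0)‖ < δ₀ satisfies x(t) → 0 as t → ∞. -/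
/-!
Along a solution `x(·)` the function `V ∘ x` has derivative `⟪∇V(x), f(x)⟫`, which is `≤ 0` on `D`
(at the origin because `V` has a minimum there, so `∇V(0) = 0`); hence `V` decreases along
solutions as long as they stay in `D`.

Stability: `V` has a positive minimum `m` on the sphere of radius `ε`, and a solution starting
where `V < m` can never reach that sphere.

Attractivity: a solution trapped in a ball `‖x‖ ≤ R` inside `D` eventually has `V(x(t))` below the
minimum of `V` on every annulus `r ≤ ‖x‖ ≤ R`. Otherwise it stays in an annulus on which
`⟪∇V, f⟫ ≤ -k < 0`, and then `V(x(t)) ≤ V(x(0)) - k t` eventually becomes negative.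
-/

open Filter Topology Set Metric

lemma exists_first_hit {g : ℝ → ℝ} {a b c : ℝ} (hab : a ≤ b) (hg : ContinuousOn g (Icc a b))
    (ha : g a < c) (hb : c ≤ g b) : ∃ t ∈ Ioc a b, g t = c ∧ ∀ s ∈ Ico a t, g s < c := by
  have hclosed : IsClosed (Icc a b ∩ g ⁻¹' {c}) :=
    hg.preimage_isClosed_of_isClosed isClosed_Icc isClosed_singleton
  obtain ⟨t, ⟨⟨hat, htb⟩, hgt⟩, hleast⟩ :=
    (isCompact_Icc.of_isClosed_subset hclosed inter_subset_left).exists_isLeast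
      (intermediate_value_Icc hab hg ⟨ha.le, hb⟩)
  have hat' : a < t := hat.lt_of_ne fun h => ha.ne (h ▸ hgt)
  refine ⟨t, ⟨hat', htb⟩, hgt, fun s ⟨has, hst⟩ => lt_of_not_ge fun hcs => ?_⟩
  obtain ⟨s', ⟨has', hs's⟩, hgs'⟩ :=
    intermediate_value_Icc has (hg.mono (Icc_subset_Icc_right (hst.le.trans htb))) ⟨ha.le, hcs⟩
  exact (hleast ⟨⟨has', hs's.trans (hst.le.trans htb)⟩, hgs'⟩).not_gt (hs's.trans_lt hst)

lemma norm_lt_of_forall_sphere_lt {E : Type*} [SeminormedAddGroup E] {γ : ℝ → E} {V : E → ℝ}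
    {ε : ℝ} (hγ : ContinuousOn γ (Ici 0)) (h0 : ‖γ 0‖ < ε)
    (hsphere : ∀ y, ‖y‖ = ε → V (γ 0) < V y)
    (hV : ∀ t ≥ 0, MapsTo γ (Icc 0 t) (closedBall 0 ε) → V (γ t) ≤ V (γ 0)) :
    ∀ t ≥ 0, ‖γ t‖ < ε := by
  intro t ht
  by_contra! hεt
  obtain ⟨t₁, ⟨ht₁, -⟩, hnorm, hbefore⟩ := exists_first_hit ht
    (continuous_norm.comp_continuousOn (hγ.mono Icc_subset_Ici_self)) h0 hεt
  have hmaps : MapsTo γ (Icc 0 t₁) (closedBall 0 ε) := fun s ⟨hs, hst⟩ => by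
    rw [mem_closedBall_zero_iff]
    rcases hst.eq_or_lt with rfl | hst
    exacts [hnorm.le, (hbefore s ⟨hs, hst⟩).le]
  exact (hV t₁ ht₁.le hmaps).not_gt (hsphere _ hnorm)

lemma exists_pos_le_on_annulus {E : Type*} [NormedAddCommGroup E] [ProperSpace E]
    {g : E → ℝ} {D : Set E} {r R : ℝ} (hr : 0 < r) (hRD : closedBall 0 R ⊆ D)
    (hg : ContinuousOn g D) (hpos : ∀ x ∈ D, x ≠ 0 → 0 < g x) :
    ∃ c > 0, ∀ x, r ≤ ‖x‖ → ‖x‖ ≤ R → c ≤ g x := by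
  have hK : IsCompact (closedBall (0 : E) R ∩ {x | r ≤ ‖x‖}) :=
    (isCompact_closedBall 0 R).inter_right (isClosed_le continuous_const continuous_norm)
  obtain ⟨c, hc, hcg⟩ := hK.exists_forall_le' (hg.mono (inter_subset_left.trans hRD))
    fun x hx => hpos x (hRD hx.1) (norm_pos_iff.1 (hr.trans_le hx.2))
  exact ⟨c, hc, fun x hrx hxR => hcg x ⟨mem_closedBall_zero_iff.2 hxR, hrx⟩⟩

variable {E : Type*} [NormedAddCommGroup E] [InnerProductSpace ℝ E]

def IsForwardSolution (f : E → E) (γ : ℝ → E) : Prop :=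
  ∀ t ≥ (0 : ℝ), HasDerivAt γ (f (γ t)) t

lemma IsForwardSolution.continuousOn {f : E → E} {γ : ℝ → E} (hγ : IsForwardSolution f γ) :
    ContinuousOn γ (Ici 0) :=
  fun t ht => (hγ t ht).continuousAt.continuousWithinAt

variable [CompleteSpace E]

noncomputable def orbitalDeriv (V : E → ℝ) (f : E → E) (x : E) : ℝ :=
  inner ℝ (gradient V x) (f x)

lemma orbitalDeriv_eq_fderiv (V : E → ℝ) (f : E → E) (x : E) :
    orbitalDeriv V f x = fderiv ℝ V x (f x) :=
  inner_gradient_left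

lemma hasDerivAt_comp_solution {V : E → ℝ} {f : E → E} {γ : ℝ → E} {t : ℝ}
    (hV : DifferentiableAt ℝ V (γ t)) (hγ : HasDerivAt γ (f (γ t)) t) :
    HasDerivAt (V ∘ γ) (orbitalDeriv V f (γ t)) t := by
  rw [orbitalDeriv_eq_fderiv]
  exact hV.hasFDerivAt.comp_hasDerivAt t hγ

lemma sub_le_mul_sub_of_orbitalDeriv_le {V : E → ℝ} {f : E → E} {D : Set E} {γ : ℝ → E}
    {a b C : ℝ} (hab : a ≤ b) (hD : IsOpen D) (hV : DifferentiableOn ℝ V D)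
    (hγ : ∀ t ∈ Icc a b, HasDerivAt γ (f (γ t)) t) (hmaps : MapsTo γ (Icc a b) D)
    (hC : ∀ t ∈ Icc a b, orbitalDeriv V f (γ t) ≤ C) :
    V (γ b) - V (γ a) ≤ C * (b - a) := by
  have hderiv : ∀ t ∈ Icc a b, HasDerivAt (V ∘ γ) (orbitalDeriv V f (γ t)) t := fun t ht =>
    hasDerivAt_comp_solution ((hV _ (hmaps ht)).differentiableAt (hD.mem_nhds (hmaps ht)))
      (hγ t ht)
  refine (convex_Icc a b).image_sub_le_mul_sub_of_deriv_le
    (fun t ht => (hderiv t ht).continuousAt.continuousWithinAt)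
    (fun t ht => (hderiv t (interior_subset ht)).differentiableAt.differentiableWithinAt)
    (fun t ht => ?_) a (left_mem_Icc.2 hab) b (right_mem_Icc.2 hab) hab
  rw [(hderiv t (interior_subset ht)).deriv]
  exact hC t (interior_subset ht)

structure IsStrictLyapunovFunction (V : E → ℝ) (f : E → E) (D : Set E) : Prop where
  isOpen : IsOpen D
  zero_mem : (0 : E) ∈ D
  contDiffOn : ContDiffOn ℝ 1 V D
  map_zero : V 0 = 0
  pos : ∀ x ∈ D, x ≠ 0 → 0 < V x
  orbitalDeriv_neg : ∀ x ∈ D, x ≠ 0 → orbitalDeriv V f x < 0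

namespace IsStrictLyapunovFunction

variable {V : E → ℝ} {f : E → E} {D : Set E}

lemma isLocalMin (hL : IsStrictLyapunovFunction V f D) : IsLocalMin V 0 := by
  filter_upwards [hL.isOpen.mem_nhds hL.zero_mem] with x hx
  rw [hL.map_zero]
  rcases eq_or_ne x 0 with rfl | hx0
  exacts [hL.map_zero.ge, (hL.pos x hx hx0).le]

lemma orbitalDeriv_nonpos (hL : IsStrictLyapunovFunction V f D) {x : E} (hx : x ∈ D) :
    orbitalDeriv V f x ≤ 0 := by
  rcases eq_or_ne x 0 with rfl | hx0
  · rw [orbitalDeriv_eq_fderiv, hL.isLocalMin.fderiv_eq_zero, zero_apply]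
  · exact (hL.orbitalDeriv_neg x hx hx0).le

lemma continuousOn_orbitalDeriv (hL : IsStrictLyapunovFunction V f D) (hf : Continuous f) :
    ContinuousOn (orbitalDeriv V f) D := by
  simp_rw [funext (orbitalDeriv_eq_fderiv V f)]
  exact (hL.contDiffOn.continuousOn_fderiv_of_isOpen hL.isOpen le_rfl).clm_apply hf.continuousOn

lemma exists_pos_forall_lt (hL : IsStrictLyapunovFunction V f D) {m : ℝ} (hm : 0 < m) :
    ∃ r > 0, ∀ x, ‖x‖ < r → V x < m := by
  have hcont : ContinuousAt V 0 :=
    hL.contDiffOn.continuousOn.continuousAt (hL.isOpen.mem_nhds hL.zero_mem)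
  obtain ⟨r, hr, hrV⟩ :=
    Metric.eventually_nhds_iff.1 (hcont.eventually (gt_mem_nhds (hL.map_zero ▸ hm)))
  exact ⟨r, hr, fun x hx => hrV (by rwa [dist_zero_right])⟩

lemma le_of_mapsTo (hL : IsStrictLyapunovFunction V f D) {γ : ℝ → E}
    (hγ : IsForwardSolution f γ) {s t : ℝ} (hs : 0 ≤ s) (hst : s ≤ t)
    (hmaps : MapsTo γ (Icc s t) D) : V (γ t) ≤ V (γ s) := by
  have := sub_le_mul_sub_of_orbitalDeriv_le hst hL.isOpen
    (hL.contDiffOn.differentiableOn one_ne_zero) (fun u hu => hγ u (hs.trans hu.1)) hmaps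
    (fun u hu => hL.orbitalDeriv_nonpos (hmaps hu))
  linarith

variable [ProperSpace E] {R : ℝ}

lemma exists_forall_norm_lt (hL : IsStrictLyapunovFunction V f D)
    (hRD : closedBall 0 R ⊆ D) {ε : ℝ} (hε : 0 < ε) (hεR : ε ≤ R) :
    ∃ δ > 0, ∀ γ, IsForwardSolution f γ → ‖γ 0‖ < δ → ∀ t ≥ 0, ‖γ t‖ < ε := by
  have hεD : closedBall 0 ε ⊆ D := (closedBall_subset_closedBall hεR).trans hRD
  obtain ⟨m, hm, hmV⟩ := exists_pos_le_on_annulus hε hεD hL.contDiffOn.continuousOn hL.pos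
  obtain ⟨δ, hδ, hδV⟩ := hL.exists_pos_forall_lt hm
  refine ⟨min δ ε, lt_min hδ hε, fun γ hγ h0 => norm_lt_of_forall_sphere_lt hγ.continuousOn
    (h0.trans_le (min_le_right _ _)) (fun y hy => ?_)
    fun t ht hmaps => hL.le_of_mapsTo hγ le_rfl ht (hmaps.mono_right hεD)⟩
  exact (hδV _ (h0.trans_le (min_le_left _ _))).trans_le (hmV y hy.ge hy.le)

lemma exists_lt_of_norm_le (hL : IsStrictLyapunovFunction V f D)
    (hRD : closedBall 0 R ⊆ D) (hf : Continuous f) {γ : ℝ → E}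
    (hγ : IsForwardSolution f γ) (hR : ∀ t ≥ 0, ‖γ t‖ ≤ R) {m : ℝ} (hm : 0 < m) :
    ∃ t ≥ 0, V (γ t) < m := by
  by_contra! hmV
  obtain ⟨r, hr, hrV⟩ := hL.exists_pos_forall_lt hm
  have hr_le : ∀ t ≥ 0, r ≤ ‖γ t‖ := fun t ht =>
    le_of_not_gt fun hlt => (hmV t ht).not_gt (hrV _ hlt)
  obtain ⟨k, hk, hkV⟩ := exists_pos_le_on_annulus hr hRD
    (hL.continuousOn_orbitalDeriv hf).neg fun x hx hx0 => neg_pos.2 (hL.orbitalDeriv_neg x hx hx0)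
  have hV0 : 0 < V (γ 0) := hm.trans_le (hmV 0 le_rfl)
  set T := V (γ 0) / k
  have hT : 0 ≤ T := by positivity
  -- on `[0, T]` the solution stays in the annulus `r ≤ ‖x‖ ≤ R`, where `V` drops at rate `≥ k`
  have hdecay := sub_le_mul_sub_of_orbitalDeriv_le (C := -k) hT hL.isOpen
    (hL.contDiffOn.differentiableOn one_ne_zero) (fun t ht => hγ t ht.1)
    (fun t ht => hRD (mem_closedBall_zero_iff.2 (hR t ht.1)))
    fun t ht => le_neg.1 (hkV _ (hr_le t ht.1) (hR t ht.1))
  have hkT : k * T = V (γ 0) := mul_div_cancel₀ _ hk.ne'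
  linarith [hmV T hT]

lemma tendsto_zero (hL : IsStrictLyapunovFunction V f D)
    (hRD : closedBall 0 R ⊆ D) (hf : Continuous f) {γ : ℝ → E} (hγ : IsForwardSolution f γ)
    (hR : ∀ t ≥ 0, ‖γ t‖ ≤ R) : Tendsto γ atTop (𝓝 0) := by
  rw [NormedAddGroup.tendsto_nhds_zero]
  intro ε hε
  obtain ⟨m, hm, hmV⟩ := exists_pos_le_on_annulus hε hRD hL.contDiffOn.continuousOn hL.pos
  obtain ⟨t₀, ht₀, hVt₀⟩ := hL.exists_lt_of_norm_le hRD hf hγ hR hm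
  filter_upwards [eventually_ge_atTop t₀] with t ht
  by_contra! hεt
  have hle := hL.le_of_mapsTo hγ ht₀ ht
    fun s hs => hRD (mem_closedBall_zero_iff.2 (hR s (ht₀.trans hs.1)))
  linarith [hmV _ hεt (hR t (ht₀.trans ht))]

end IsStrictLyapunovFunction

theorem lyapunov_asymptotic_stability_general {n : ℕ}
    (D : Set (EuclideanSpace ℝ (Fin n))) (hD : IsOpen D) (h0D : (0 : EuclideanSpace ℝ (Fin n)) ∈ D)
    (f : EuclideanSpace ℝ (Fin n) → EuclideanSpace ℝ (Fin n))
    (hf : LocallyLipschitz f)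
    (V : EuclideanSpace ℝ (Fin n) → ℝ) (hV : ContDiffOn ℝ 1 V D)
    (hV0 : V 0 = 0) (hVpos : ∀ x ∈ D, x ≠ 0 → 0 < V x)
    (hVdot : ∀ x ∈ D, x ≠ 0 → inner ℝ (gradient V x) (f x) < (0 : ℝ)) :
    (∀ ε > (0 : ℝ), ∃ δ > (0 : ℝ), ∀ sol : ℝ → EuclideanSpace ℝ (Fin n),
        (∀ t ≥ (0 : ℝ), HasDerivAt sol (f (sol t)) t) → ‖sol 0‖ < δ →
        ∀ t ≥ (0 : ℝ), ‖sol t‖ < ε) ∧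
    (∃ δ₀ > (0 : ℝ), ∀ sol : ℝ → EuclideanSpace ℝ (Fin n),
        (∀ t ≥ (0 : ℝ), HasDerivAt sol (f (sol t)) t) → ‖sol 0‖ < δ₀ →
        Tendsto sol atTop (𝓝 0)) := by
  have hL : IsStrictLyapunovFunction V f D := ⟨hD, h0D, hV, hV0, hVpos, hVdot⟩
  obtain ⟨R, hR, hRD⟩ := nhds_basis_closedBall.mem_iff.1 (hD.mem_nhds h0D)
  refine ⟨fun ε hε => ?_, ?_⟩
  · obtain ⟨δ, hδ, hδε⟩ := hL.exists_forall_norm_lt hRD (lt_min hε hR) (min_le_right ε R)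
    exact ⟨δ, hδ, fun sol hsol h0 t ht => (hδε sol hsol h0 t ht).trans_le (min_le_left ε R)⟩
  · obtain ⟨δ, hδ, hδR⟩ := hL.exists_forall_norm_lt hRD hR le_rfl
    exact ⟨δ, hδ, fun sol hsol h0 =>
      hL.tendsto_zero hRD hf.continuous hsol fun t ht => (hδR sol hsol h0 t ht).le⟩

theorem lyapunov_asymptotic_stability {n : ℕ}
    (D : Set (EuclideanSpace ℝ (Fin n))) (hD : IsOpen D) (h0D : (0 : EuclideanSpace ℝ (Fin n)) ∈ D)
    (f : EuclideanSpace ℝ (Fin n) → EuclideanSpace ℝ (Fin n))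
    (hf : LocallyLipschitz f) (hf0 : f 0 = 0)
    (V : EuclideanSpace ℝ (Fin n) → ℝ) (hV : ContDiffOn ℝ 1 V D)
    (hV0 : V 0 = 0) (hVpos : ∀ x ∈ D, x ≠ 0 → 0 < V x)
    (hVdot : ∀ x ∈ D, x ≠ 0 → inner ℝ (gradient V x) (f x) < (0 : ℝ)) :
    (∀ ε > (0 : ℝ), ∃ δ > (0 : ℝ), ∀ sol : ℝ → EuclideanSpace ℝ (Fin n),
        (∀ t ≥ (0 : ℝ), HasDerivAt sol (f (sol t)) t) → ‖sol 0‖ < δ →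
        ∀ t ≥ (0 : ℝ), ‖sol t‖ < ε) ∧
    (∃ δ₀ > (0 : ℝ), ∀ sol : ℝ → EuclideanSpace ℝ (Fin n),
        (∀ t ≥ (0 : ℝ), HasDerivAt sol (f (sol t)) t) → ‖sol 0‖ < δ₀ →
        Tendsto sol atTop (𝓝 0)) :=
  lyapunov_asymptotic_stability_general D hD h0D f hf V hV hV0 hVpos hVdot
end

section
/- Let D ⊆ ℝⁿ be an open set containing the origin, let f : ℝⁿ → ℝⁿ be locally Lipschitz with f(0) = 0, and let V : ℝⁿ → ℝ be continuously differentiable on D with V(0) = 0, V(x) > 0 for all x ∈ D \ {0}, and ⟨∇V(x), f(x)⟩ < 0 for all x ∈ D \ {0}. Let c > 0 be such that the sublevel set V^c = {x ∈ D : V(x) ≤ c} is compact and contained in the interior of D. Then V^c is a region of attraction: every solution x(·) of ẋ = f(x) with x(0) ∈ V^c satisfies x(t) ∈ V^c for all t ≥ 0 and x(t) → 0 as t → ∞. -/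
/-!
Along a solution `γ`, the chain rule gives `(V ∘ γ)' = V'(γ) (f γ) ≤ 0` as long as `γ` stays in
the open set `D`. Since `D` is open, a solution that has reached a point of the sublevel set
`{V ≤ c}` stays in `D`, hence cannot increase `V`, for a short while; the sublevel set is closed,
so a continuity argument shows it is forward invariant. `V ∘ γ` is then nonincreasing and
nonnegative. If it stayed above some `η > 0`, the solution would live in the compact set
`{x ∈ V^c | η ≤ V x}`, on which `V'(x) (f x)` is bounded above by some `-δ < 0`, and `V ∘ γ` would
tend to `-∞`. Hence `V ∘ γ → 0`, and positive definiteness of `V` on the compact set `V^c`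
turns this into `γ → 0`.
-/

open Filter Topology Set

theorem forall_mem_of_eventually_mem_nhdsGT {X : Type*} [TopologicalSpace X] {γ : ℝ → X}
    {K : Set X} {a : ℝ} (hK : IsClosed K) (hγ : ContinuousOn γ (Ici a)) (ha : γ a ∈ K)
    (hstep : ∀ t ≥ a, γ t ∈ K → ∀ᶠ s in 𝓝[>] t, γ s ∈ K) :
    ∀ t ≥ a, γ t ∈ K := by
  intro b hb
  have hclosed : IsClosed (γ ⁻¹' K ∩ Icc a b) := by
    rw [inter_comm]
    exact (hγ.mono Icc_subset_Ici_self).preimage_isClosed_of_isClosed isClosed_Icc hK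
  exact hclosed.Icc_subset_of_forall_mem_nhdsWithin ha (fun t ht => hstep t ht.2.1 ht.1)
    ⟨hb, le_rfl⟩

theorem tendsto_of_isCompact_of_tendsto_comp {X α : Type*} [TopologicalSpace X] {K : Set X}
    (hK : IsCompact K) {V : X → ℝ} (hV : ContinuousOn V K) {x₀ : X}
    (hpos : ∀ x ∈ K, x ≠ x₀ → 0 < V x) {l : Filter α} {γ : α → X} (hγK : ∀ᶠ a in l, γ a ∈ K)
    (hVγ : Tendsto (fun a => V (γ a)) l (𝓝 0)) : Tendsto γ l (𝓝 x₀) := by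
  refine (nhds_basis_opens x₀).tendsto_right_iff.2 fun U ⟨hx₀U, hU⟩ => ?_
  obtain ⟨m, hm, hmV⟩ := (hK.diff hU).exists_forall_le' (hV.mono sdiff_subset) (a := 0)
    fun x hx => hpos x hx.1 fun h => hx.2 (h ▸ hx₀U)
  filter_upwards [hγK, hVγ.eventually (gt_mem_nhds hm)] with a ha hlt
  by_contra h
  exact (hmV _ ⟨ha, h⟩).not_gt hlt

section Trajectory

variable {E : Type*} [NormedAddCommGroup E] [NormedSpace ℝ E] {D : Set E} {f : E → E}
  {V : E → ℝ} {γ : ℝ → E}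

theorem hasDerivAt_comp_trajectory (hD : IsOpen D) (hV : DifferentiableOn ℝ V D) {t : ℝ}
    (ht : γ t ∈ D) (hγ : HasDerivAt γ (f (γ t)) t) :
    HasDerivAt (fun s => V (γ s)) (fderiv ℝ V (γ t) (f (γ t))) t :=
  (hV.differentiableAt (hD.mem_nhds ht)).hasFDerivAt.comp_hasDerivAt t hγ

theorem antitoneOn_comp_trajectory (hD : IsOpen D) (hV : DifferentiableOn ℝ V D)
    (hW : ∀ x ∈ D, fderiv ℝ V x (f x) ≤ 0) {I : Set ℝ} (hI : Convex ℝ I)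
    (hγ : ∀ t ∈ I, HasDerivAt γ (f (γ t)) t) (hID : ∀ t ∈ I, γ t ∈ D) :
    AntitoneOn (fun t => V (γ t)) I := by
  have hderiv t (ht : t ∈ I) := hasDerivAt_comp_trajectory hD hV (hID t ht) (hγ t ht)
  exact antitoneOn_of_hasDerivWithinAt_nonpos hI
    (fun t ht => (hderiv t ht).continuousAt.continuousWithinAt)
    (fun t ht => (hderiv t (interior_subset ht)).hasDerivWithinAt)
    (fun t ht => hW _ (hID t (interior_subset ht)))

theorem eventually_comp_le_nhdsGT (hD : IsOpen D) (hV : DifferentiableOn ℝ V D)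
    (hW : ∀ x ∈ D, fderiv ℝ V x (f x) ≤ 0) {t : ℝ} (hγ : ∀ s ≥ t, HasDerivAt γ (f (γ s)) s)
    (ht : γ t ∈ D) : ∀ᶠ s in 𝓝[>] t, γ s ∈ D ∧ V (γ s) ≤ V (γ t) := by
  obtain ⟨u, htu, hu⟩ := mem_nhdsGE_iff_exists_Icc_subset.1 <| nhdsWithin_le_nhds <|
    (hγ t le_rfl).continuousAt.preimage_mem_nhds (hD.mem_nhds ht)
  have hanti := antitoneOn_comp_trajectory hD hV hW (convex_Icc t u) (fun s hs => hγ s hs.1) hu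
  filter_upwards [Ioc_mem_nhdsGT htu] with s hs
  exact ⟨hu (Ioc_subset_Icc_self hs),
    hanti (left_mem_Icc.2 htu.le) (Ioc_subset_Icc_self hs) hs.1.le⟩

theorem sublevel_invariant (hD : IsOpen D) (hV : DifferentiableOn ℝ V D)
    (hW : ∀ x ∈ D, fderiv ℝ V x (f x) ≤ 0) {c : ℝ} (hK : IsClosed {x ∈ D | V x ≤ c})
    (hγ : ∀ t ≥ 0, HasDerivAt γ (f (γ t)) t) (h0 : γ 0 ∈ {x ∈ D | V x ≤ c}) :
    ∀ t ≥ 0, γ t ∈ {x ∈ D | V x ≤ c} :=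
  forall_mem_of_eventually_mem_nhdsGT hK (fun t ht => (hγ t ht).continuousAt.continuousWithinAt)
    h0 fun _ ht hγt =>
      (eventually_comp_le_nhdsGT hD hV hW (fun s hs => hγ s (ht.trans hs)) hγt.1).mono
        fun _ hs => ⟨hs.1, hs.2.trans hγt.2⟩

theorem tendsto_comp_atBot_of_forall_mem_isCompact (hD : IsOpen D) (hV : ContDiffOn ℝ 1 V D)
    (hf : Continuous f) (hγ : ∀ t ≥ 0, HasDerivAt γ (f (γ t)) t) {M : Set E} (hM : IsCompact M)
    (hMD : M ⊆ D) (hneg : ∀ x ∈ M, fderiv ℝ V x (f x) < 0) (hγM : ∀ t ≥ 0, γ t ∈ M) :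
    Tendsto (fun t => V (γ t)) atTop atBot := by
  obtain ⟨x₀, hx₀, hmax⟩ := hM.exists_isMaxOn ⟨γ 0, hγM 0 le_rfl⟩
    (((hV.continuousOn_fderiv_of_isOpen hD le_rfl).clm_apply hf.continuousOn).mono hMD)
  set a := fderiv ℝ V x₀ (f x₀)
  have hderiv : ∀ t ≥ 0, HasDerivAt (fun s => V (γ s) - a * s)
      (fderiv ℝ V (γ t) (f (γ t)) - a) t := fun t ht =>
    (hasDerivAt_comp_trajectory hD (hV.differentiableOn one_ne_zero) (hMD (hγM t ht))
      (hγ t ht)).sub (by simpa using (hasDerivAt_id t).const_mul a)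
  have hanti : AntitoneOn (fun s => V (γ s) - a * s) (Ici 0) :=
    antitoneOn_of_hasDerivWithinAt_nonpos (convex_Ici 0)
      (fun t ht => (hderiv t ht).continuousAt.continuousWithinAt)
      (fun t ht => (hderiv t (interior_subset ht)).hasDerivWithinAt)
      (fun t ht => sub_nonpos.2 (hmax (hγM t (interior_subset ht))))
  refine tendsto_atBot_mono' _ ?_ <| tendsto_atBot_add_const_left _ (V (γ 0)) <|
    tendsto_id.const_mul_atTop_of_neg (hneg x₀ hx₀)
  filter_upwards [eventually_ge_atTop 0] with t ht
  have := hanti self_mem_Ici ht ht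
  simp only [mul_zero, sub_zero, id] at this ⊢
  linarith

theorem tendsto_comp_trajectory_zero (hD : IsOpen D) (hV : ContDiffOn ℝ 1 V D)
    (hf : Continuous f) (hW : ∀ x ∈ D, fderiv ℝ V x (f x) ≤ 0)
    (hγ : ∀ t ≥ 0, HasDerivAt γ (f (γ t)) t) {K : Set E} (hK : IsCompact K) (hKD : K ⊆ D)
    (hγK : ∀ t ≥ 0, γ t ∈ K) (hnonneg : ∀ x ∈ K, 0 ≤ V x)
    (hneg : ∀ x ∈ K, 0 < V x → fderiv ℝ V x (f x) < 0) :
    Tendsto (fun t => V (γ t)) atTop (𝓝 0) := by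
  have hanti : AntitoneOn (fun t => V (γ t)) (Ici 0) :=
    antitoneOn_comp_trajectory hD (hV.differentiableOn one_ne_zero) hW (convex_Ici 0) hγ
      fun t ht => hKD (hγK t ht)
  refine tendsto_order.2 ⟨fun a ha => (eventually_ge_atTop 0).mono fun t ht =>
    ha.trans_le (hnonneg _ (hγK t ht)), fun η hη => ?_⟩
  obtain ⟨T, hT, hTη⟩ : ∃ T ≥ 0, V (γ T) < η := by
    by_contra! hge
    have hM : IsCompact {x ∈ K | η ≤ V x} := hK.of_isClosed_subset
      ((hV.continuousOn.mono hKD).preimage_isClosed_of_isClosed hK.isClosed isClosed_Ici)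
      (sep_subset _ _)
    have hbot := tendsto_comp_atBot_of_forall_mem_isCompact hD hV hf hγ hM ((sep_subset _ _).trans hKD)
      (fun x hx => hneg x hx.1 (hη.trans_le hx.2)) fun t ht => ⟨hγK t ht, hge t ht⟩
    obtain ⟨t, hlt, ht⟩ := ((hbot.eventually (eventually_lt_atBot η)).and
      (eventually_ge_atTop 0)).exists
    exact (hge t ht).not_gt hlt
  filter_upwards [eventually_ge_atTop T] with t ht
  exact (hanti hT (hT.trans ht) ht).trans_lt hTη

end Trajectory

theorem lyapunov_sublevel_region_of_attraction_general {n : ℕ}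
    (D : Set (EuclideanSpace ℝ (Fin n))) (hD : IsOpen D)
    (f : EuclideanSpace ℝ (Fin n) → EuclideanSpace ℝ (Fin n))
    (hf : LocallyLipschitz f) (hf0 : f 0 = 0)
    (V : EuclideanSpace ℝ (Fin n) → ℝ) (hV : ContDiffOn ℝ 1 V D)
    (hV0 : V 0 = 0) (hVpos : ∀ x ∈ D, x ≠ 0 → 0 < V x)
    (hVdot : ∀ x ∈ D, x ≠ 0 → inner ℝ (gradient V x) (f x) < (0 : ℝ))
    (c : ℝ)
    (hcompact : IsCompact {x ∈ D | V x ≤ c}) :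
    ∀ sol : ℝ → EuclideanSpace ℝ (Fin n),
      (∀ t ≥ (0 : ℝ), HasDerivAt sol (f (sol t)) t) →
      sol 0 ∈ {x ∈ D | V x ≤ c} →
      (∀ t ≥ (0 : ℝ), sol t ∈ {x ∈ D | V x ≤ c}) ∧ Tendsto sol atTop (𝓝 0) := by
  intro sol hsol h0
  simp only [inner_gradient_left] at hVdot
  have hW : ∀ x ∈ D, fderiv ℝ V x (f x) ≤ 0 := fun x hx => by
    rcases eq_or_ne x 0 with rfl | hx0
    · simp [hf0]
    · exact (hVdot x hx hx0).le
  have hnonneg : ∀ x ∈ D, 0 ≤ V x := fun x hx => by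
    rcases eq_or_ne x 0 with rfl | hx0
    · exact hV0.ge
    · exact (hVpos x hx hx0).le
  have hinv := sublevel_invariant hD (hV.differentiableOn one_ne_zero) hW hcompact.isClosed hsol h0
  refine ⟨hinv, tendsto_of_isCompact_of_tendsto_comp hcompact (hV.continuousOn.mono (sep_subset _ _))
    (fun x hx => hVpos x hx.1) ((eventually_ge_atTop 0).mono hinv) ?_⟩
  exact tendsto_comp_trajectory_zero hD hV hf.continuous hW hsol hcompact (sep_subset _ _) hinv
    (fun x hx => hnonneg x hx.1)
    fun x hx hVx => hVdot x hx.1 fun h => hVx.ne' (h ▸ hV0)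

theorem lyapunov_sublevel_region_of_attraction {n : ℕ}
    (D : Set (EuclideanSpace ℝ (Fin n))) (hD : IsOpen D) (h0D : (0 : EuclideanSpace ℝ (Fin n)) ∈ D)
    (f : EuclideanSpace ℝ (Fin n) → EuclideanSpace ℝ (Fin n))
    (hf : LocallyLipschitz f) (hf0 : f 0 = 0)
    (V : EuclideanSpace ℝ (Fin n) → ℝ) (hV : ContDiffOn ℝ 1 V D)
    (hV0 : V 0 = 0) (hVpos : ∀ x ∈ D, x ≠ 0 → 0 < V x)
    (hVdot : ∀ x ∈ D, x ≠ 0 → inner ℝ (gradient V x) (f x) < (0 : ℝ))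
    (c : ℝ) (hc : 0 < c)
    (hcompact : IsCompact {x ∈ D | V x ≤ c})
    (hinterior : {x ∈ D | V x ≤ c} ⊆ interior D) :
    ∀ sol : ℝ → EuclideanSpace ℝ (Fin n),
      (∀ t ≥ (0 : ℝ), HasDerivAt sol (f (sol t)) t) →
      sol 0 ∈ {x ∈ D | V x ≤ c} →
      (∀ t ≥ (0 : ℝ), sol t ∈ {x ∈ D | V x ≤ c}) ∧ Tendsto sol atTop (𝓝 0) :=
  lyapunov_sublevel_region_of_attraction_general D hD f hf hf0 V hV hV0 hVpos hVdot c hcompact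
end

section
/- (Sufficiency direction of Zubov's theorem.) Let D ⊆ ℝⁿ be an open set containing the origin, let f : ℝⁿ → ℝⁿ be locally Lipschitz with f(0) = 0, and suppose there exist a continuously differentiable function W : ℝⁿ → ℝ and a continuous function η : ℝⁿ → ℝ such that: (1) 0 < W(x) < 1 for all x ∈ D \ {0} and W(0) = 0; (2) η(0) = 0 and η(x) > 0 for all x ∈ D \ {0}; (3) for every sufficiently small c₃ > 0 there exist c₁ > 0 and c₂ > 0 such that for all x ∈ D with ‖x‖ ≥ c₃ one has W(x) > c₁ and η(x) > c₂; (4) W(x) → 1 as x → y for every y ∈ ∂D; (5) ⟨∇W(x), f(x)⟩ + η(x)·(1 − W(x)) = 0 for all x ∈ D. Then every solution x(·) of ẋ = f(x) with x(0) ∈ D satisfies x(t) ∈ D for all t ≥ 0 and x(t) → 0 as t → ∞; that is, D is contained in the domain of attraction of the origin. -/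
/-!
Along a trajectory in `D`, the identity `⟪∇W, f⟫ = -η (1 - W)` makes `W` nonincreasing, so the
trajectory cannot reach `∂D`, where `W` tends to `1 > W (x 0)`. Off any ball around the origin,
`η` is bounded below by a positive constant and `1 - W ≥ 1 - W (x 0) > 0`, so `W` decreases at a
uniform rate until the trajectory enters that ball; hence `W (x t)` becomes arbitrarily small, and
since `W` is bounded below off every ball around `0` and nonincreasing along the trajectory, `x t`
eventually stays in every such ball.
-/

open Filter Topology Set

theorem HasGradientAt.hasDerivAt_comp {E : Type*} [NormedAddCommGroup E] [InnerProductSpace ℝ E]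
    [CompleteSpace E] {W : E → ℝ} {w v : E} {γ : ℝ → E} {t : ℝ}
    (hW : HasGradientAt W w (γ t)) (hγ : HasDerivAt γ v t) :
    HasDerivAt (W ∘ γ) (inner ℝ w v) t := by
  simpa using hW.hasFDerivAt.comp_hasDerivAt t hγ

theorem exists_le_of_hasDerivAt_le_neg_s11 {g g' : ℝ → ℝ} {c K : ℝ} (hK : 0 < K)
    (hg : ∀ t ≥ 0, HasDerivAt g (g' t) t) (hg' : ∀ t ≥ 0, c < g t → g' t ≤ -K) :
    ∃ t ≥ 0, g t ≤ c := by
  by_contra! hgt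
  set T := (g 0 - c) / K + 1
  have hT : 0 ≤ T := by
    have := hgt 0 le_rfl
    positivity
  have hdecay : g T - g 0 ≤ -K * (T - 0) := by
    refine (convex_Ici 0).image_sub_le_mul_sub_of_deriv_le
      (fun t ht => (hg t ht).continuousAt.continuousWithinAt)
      (fun t ht => ?_) (fun t ht => ?_) 0 self_mem_Ici T hT hT
    all_goals rw [interior_Ici] at ht
    · exact (hg t ht.le).differentiableAt.differentiableWithinAt
    · rw [(hg t ht.le).deriv]
      exact hg' t ht.le (hgt t ht.le)
  have hKT : K * T = g 0 - c + K := by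
    simp only [T]
    field_simp
  linarith [hgt T hT]

theorem forall_pos_of_forall_small {P : ℝ → Prop} (hP : ∀ ⦃a b⦄, 0 < a → a ≤ b → P a → P b)
    (h : ∃ ε > 0, ∀ c, 0 < c → c < ε → P c) {r : ℝ} (hr : 0 < r) : P r := by
  obtain ⟨ε, hε, h⟩ := h
  exact hP (by positivity) (min_le_left r (ε / 2))
    (h _ (by positivity) ((min_le_right _ _).trans_lt (half_lt_self hε)))

section Barrier

variable {X : Type*} {D : Set X} {V η : X → ℝ} {γ : ℝ → X}

theorem antitoneOn_comp_of_hasDerivAt (hV1 : ∀ x ∈ D, V x ≤ 1) (hη : ∀ x ∈ D, 0 ≤ η x)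
    (hderiv : ∀ t ≥ 0, γ t ∈ D → HasDerivAt (V ∘ γ) (-(η (γ t) * (1 - V (γ t)))) t)
    {s : Set ℝ} (hs : Convex ℝ s) (hs0 : s ⊆ Ici 0) (hsD : MapsTo γ s D) :
    AntitoneOn (V ∘ γ) s :=
  antitoneOn_of_hasDerivWithinAt_nonpos hs
    (fun t ht => (hderiv t (hs0 ht) (hsD ht)).continuousAt.continuousWithinAt)
    (fun t ht => (hderiv t (hs0 (interior_subset ht)) (hsD (interior_subset ht))).hasDerivWithinAt)
    fun t ht => by
      have hγt := hsD (interior_subset ht)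
      have := mul_nonneg (hη _ hγt) (sub_nonneg.2 (hV1 _ hγt))
      linarith

theorem mapsTo_Ici_of_tendsto_frontier [TopologicalSpace X] (hD : IsOpen D)
    (hγ : ContinuousOn γ (Ici 0))
    (hV1 : ∀ x ∈ D, V x < 1) (hη : ∀ x ∈ D, 0 ≤ η x)
    (hderiv : ∀ t ≥ 0, γ t ∈ D → HasDerivAt (V ∘ γ) (-(η (γ t) * (1 - V (γ t)))) t)
    (hfrontier : ∀ y ∈ frontier D, Tendsto V (𝓝[D] y) (𝓝 1)) (h0 : γ 0 ∈ D) :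
    MapsTo γ (Ici 0) D := by
  intro t₀ ht₀
  by_contra hγt₀
  set S := Ici (0 : ℝ) ∩ γ ⁻¹' Dᶜ
  have hS : IsClosed S := hγ.preimage_isClosed_of_isClosed isClosed_Ici hD.isClosed_compl
  have hSbdd : BddBelow S := ⟨0, fun t ht => ht.1⟩
  set T := sInf S
  obtain ⟨hT0, hγT⟩ : T ∈ S := hS.csInf_mem ⟨t₀, ht₀, hγt₀⟩ hSbdd
  have hTpos : 0 < T := lt_of_le_of_ne hT0 fun h => hγT (h ▸ h0)
  have hbefore : MapsTo γ (Ico 0 T) D := fun t ht => by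
    by_contra hγt
    exact (csInf_le hSbdd ⟨ht.1, hγt⟩).not_gt ht.2
  have hclosure : T ∈ closure (Ico 0 T) := by
    rw [closure_Ico hTpos.ne]
    exact right_mem_Icc.2 hT0
  have := mem_closure_iff_nhdsWithin_neBot.1 hclosure
  have hγlim : Tendsto γ (𝓝[Ico 0 T] T) (𝓝[D] (γ T)) :=
    tendsto_nhdsWithin_iff.2 ⟨(hγ T hT0).mono Ico_subset_Ici_self,
      eventually_nhdsWithin_of_forall hbefore⟩
  have hfrT : γ T ∈ frontier D := by
    rw [hD.frontier_eq]
    exact ⟨mem_closure_of_tendsto (hγlim.mono_right nhdsWithin_le_nhds)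
      (eventually_nhdsWithin_of_forall hbefore), hγT⟩
  have hanti := antitoneOn_comp_of_hasDerivAt (fun x hx => (hV1 x hx).le) hη hderiv
    (convex_Ico 0 T) Ico_subset_Ici_self hbefore
  have : 1 ≤ V (γ 0) := le_of_tendsto ((hfrontier _ hfrT).comp hγlim)
    (eventually_nhdsWithin_of_forall fun t ht => hanti (left_mem_Ico.2 hTpos) ht ht.1)
  exact (hV1 _ h0).not_ge this

end Barrier

section Normed

variable {E : Type*} [NormedAddCommGroup E] {D : Set E} {V η : E → ℝ} {γ : ℝ → E}

theorem exists_comp_le_of_hasDerivAt (hV0 : V 0 = 0) (hVc : ContinuousAt V 0)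
    (hanti : AntitoneOn (V ∘ γ) (Ici 0)) (hη : ∀ x ∈ D, 0 ≤ η x)
    (hηbound : ∀ r > 0, ∃ c > 0, ∀ x ∈ D, r ≤ ‖x‖ → c < η x)
    (hderiv : ∀ t ≥ 0, γ t ∈ D → HasDerivAt (V ∘ γ) (-(η (γ t) * (1 - V (γ t)))) t)
    (hγD : MapsTo γ (Ici 0) D) (hγ0 : V (γ 0) < 1) {c : ℝ} (hc : 0 < c) :
    ∃ t ≥ 0, V (γ t) ≤ c := by
  obtain ⟨δ, hδ, hball⟩ := Metric.continuousAt_iff.1 hVc c hc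
  obtain ⟨c₂, hc₂, hη₂⟩ := hηbound δ hδ
  refine exists_le_of_hasDerivAt_le_neg_s11 (mul_pos hc₂ (sub_pos.2 hγ0))
    (fun t ht => hderiv t ht (hγD ht)) fun t ht hct => ?_
  have hfar : δ ≤ ‖γ t‖ := by
    by_contra! hnear
    have := hball (by simpa using hnear)
    rw [hV0, Real.dist_eq, sub_zero] at this
    exact (abs_lt.1 this).2.not_ge hct.le
  have hVt : V (γ t) ≤ V (γ 0) := hanti self_mem_Ici ht ht
  have := mul_le_mul (hη₂ _ (hγD ht) hfar).le (by linarith : 1 - V (γ 0) ≤ 1 - V (γ t))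
    (sub_pos.2 hγ0).le (hη _ (hγD ht))
  linarith

theorem tendsto_zero_of_antitoneOn_comp (hanti : AntitoneOn (V ∘ γ) (Ici 0))
    (hVbound : ∀ r > 0, ∃ c > 0, ∀ x ∈ D, r ≤ ‖x‖ → c < V x) (hγD : MapsTo γ (Ici 0) D)
    (hreach : ∀ c > 0, ∃ t ≥ 0, V (γ t) ≤ c) : Tendsto γ atTop (𝓝 0) := by
  refine Metric.tendsto_atTop.2 fun r hr => ?_
  obtain ⟨c, hc, hVc⟩ := hVbound r hr
  obtain ⟨t₀, ht₀, hVt₀⟩ := hreach c hc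
  refine ⟨t₀, fun t ht => ?_⟩
  have ht0 : (0 : ℝ) ≤ t := ht₀.trans ht
  rw [dist_zero_right]
  by_contra! hfar
  exact (hVc _ (hγD ht0) hfar).not_ge ((hanti ht₀ ht0 ht).trans hVt₀)

end Normed

theorem zubov_sufficiency_general {n : ℕ}
    (D : Set (EuclideanSpace ℝ (Fin n))) (hD : IsOpen D)
    (f : EuclideanSpace ℝ (Fin n) → EuclideanSpace ℝ (Fin n))
    (W : EuclideanSpace ℝ (Fin n) → ℝ) (hW : ContDiff ℝ 1 W)
    (η : EuclideanSpace ℝ (Fin n) → ℝ)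
    (h1 : (∀ x ∈ D, x ≠ 0 → 0 < W x ∧ W x < 1) ∧ W 0 = 0)
    (h2 : η 0 = 0 ∧ ∀ x ∈ D, x ≠ 0 → 0 < η x)
    (h3 : ∃ ε > (0 : ℝ), ∀ c₃ : ℝ, 0 < c₃ → c₃ < ε →
        ∃ c₁ > (0 : ℝ), ∃ c₂ > (0 : ℝ), ∀ x ∈ D, c₃ ≤ ‖x‖ → c₁ < W x ∧ c₂ < η x)
    (h4 : ∀ y ∈ frontier D, Tendsto W (𝓝[D] y) (𝓝 1))
    (h5 : ∀ x ∈ D, inner ℝ (gradient W x) (f x) + η x * (1 - W x) = (0 : ℝ)) :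
    ∀ sol : ℝ → EuclideanSpace ℝ (Fin n),
      (∀ t ≥ (0 : ℝ), HasDerivAt sol (f (sol t)) t) → sol 0 ∈ D →
      (∀ t ≥ (0 : ℝ), sol t ∈ D) ∧ Tendsto sol atTop (𝓝 0) := by
  intro sol hsol h0
  have hW1 : ∀ x ∈ D, W x < 1 := fun x hx =>
    (eq_or_ne x 0).elim (fun h => by simp [h, h1.2]) fun hx0 => (h1.1 x hx hx0).2
  have hη : ∀ x ∈ D, 0 ≤ η x := fun x hx =>
    (eq_or_ne x 0).elim (fun h => h ▸ h2.1.ge) fun hx0 => (h2.2 x hx hx0).le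
  have hderiv : ∀ t ≥ 0, sol t ∈ D → HasDerivAt (W ∘ sol) (-(η (sol t) * (1 - W (sol t)))) t :=
    fun t ht hsolt => by
      rw [← eq_neg_of_add_eq_zero_left (h5 _ hsolt)]
      exact ((hW.differentiable one_ne_zero _).hasGradientAt).hasDerivAt_comp (hsol t ht)
  have hbound : ∀ r > 0, ∃ c₁ > 0, ∃ c₂ > 0, ∀ x ∈ D, r ≤ ‖x‖ → c₁ < W x ∧ c₂ < η x :=
    fun r hr => forall_pos_of_forall_small (fun a b _ hab ⟨c₁, hc₁, c₂, hc₂, h⟩ =>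
      ⟨c₁, hc₁, c₂, hc₂, fun x hx hbx => h x hx (hab.trans hbx)⟩) h3 hr
  have hWbound : ∀ r > 0, ∃ c > 0, ∀ x ∈ D, r ≤ ‖x‖ → c < W x := fun r hr =>
    let ⟨c₁, hc₁, _, _, h⟩ := hbound r hr
    ⟨c₁, hc₁, fun x hx hrx => (h x hx hrx).1⟩
  have hηbound : ∀ r > 0, ∃ c > 0, ∀ x ∈ D, r ≤ ‖x‖ → c < η x := fun r hr =>
    let ⟨_, _, c₂, hc₂, h⟩ := hbound r hr
    ⟨c₂, hc₂, fun x hx hrx => (h x hx hrx).2⟩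
  have hinv : MapsTo sol (Ici 0) D := mapsTo_Ici_of_tendsto_frontier hD
    (fun t ht => (hsol t ht).continuousAt.continuousWithinAt) hW1 hη hderiv h4 h0
  have hanti : AntitoneOn (W ∘ sol) (Ici 0) := antitoneOn_comp_of_hasDerivAt
    (fun x hx => (hW1 x hx).le) hη hderiv (convex_Ici 0) subset_rfl hinv
  exact ⟨fun t ht => hinv ht, tendsto_zero_of_antitoneOn_comp hanti hWbound hinv fun c hc =>
    exists_comp_le_of_hasDerivAt h1.2 hW.continuous.continuousAt hanti hη hηbound hderiv hinv
      (hW1 _ h0) hc⟩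

theorem zubov_sufficiency {n : ℕ}
    (D : Set (EuclideanSpace ℝ (Fin n))) (hD : IsOpen D) (h0D : (0 : EuclideanSpace ℝ (Fin n)) ∈ D)
    (f : EuclideanSpace ℝ (Fin n) → EuclideanSpace ℝ (Fin n))
    (hf : LocallyLipschitz f) (hf0 : f 0 = 0)
    (W : EuclideanSpace ℝ (Fin n) → ℝ) (hW : ContDiff ℝ 1 W)
    (η : EuclideanSpace ℝ (Fin n) → ℝ) (hη : Continuous η)
    (h1 : (∀ x ∈ D, x ≠ 0 → 0 < W x ∧ W x < 1) ∧ W 0 = 0)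
    (h2 : η 0 = 0 ∧ ∀ x ∈ D, x ≠ 0 → 0 < η x)
    (h3 : ∃ ε > (0 : ℝ), ∀ c₃ : ℝ, 0 < c₃ → c₃ < ε →
        ∃ c₁ > (0 : ℝ), ∃ c₂ > (0 : ℝ), ∀ x ∈ D, c₃ ≤ ‖x‖ → c₁ < W x ∧ c₂ < η x)
    (h4 : ∀ y ∈ frontier D, Tendsto W (𝓝[D] y) (𝓝 1))
    (h5 : ∀ x ∈ D, inner ℝ (gradient W x) (f x) + η x * (1 - W x) = (0 : ℝ)) :
    ∀ sol : ℝ → EuclideanSpace ℝ (Fin n),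
      (∀ t ≥ (0 : ℝ), HasDerivAt sol (f (sol t)) t) → sol 0 ∈ D →
      (∀ t ≥ (0 : ℝ), sol t ∈ D) ∧ Tendsto sol atTop (𝓝 0) :=
  zubov_sufficiency_general D hD f W hW η h1 h2 h3 h4 h5
end

section
/- Let A be a real n×n matrix and let P and Q be symmetric positive definite n×n matrices satisfying the Lyapunov matrix equation P·A + Aᵀ·P = −Q. Let g : ℝⁿ → ℝⁿ be continuous with the property that for every ε > 0 there exists δ > 0 such that ‖x‖ < δ implies ‖g(x)‖ ≤ ε·‖x‖ (i.e., ‖g(x)‖/‖x‖ → 0 as x → 0). Then there exists c > 0 such that for every x ≠ 0 with xᵀ P x ≤ c, one has 2·xᵀ P (A x + g(x)) < 0; i.e., the quadratic Lyapunov function V_P(x) = xᵀ P x is strictly decreasing along the nonlinear dynamics ẋ = A x + g(x) on the punctured sublevel set {x ≠ 0 : V_P(x) ≤ c}. -/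
/-!
Since `P` is symmetric, the Lyapunov equation turns the linear part of `2 xᵀ P (A x + g x)` into
`-xᵀ Q x ≤ -m_Q ‖x‖²`, while the perturbation contributes at most `2 ‖P‖ ‖x‖ ‖g x‖`, which is
`o(‖x‖²)`. Hence the derivative is negative on a small punctured ball, and a small sublevel set of
`V_P` lies in that ball because `V_P(x) ≥ m_P ‖x‖²`. The constants `m_P, m_Q > 0` are the minima of
the two quadratic forms on the (compact) unit sphere.
-/

open Matrix

open scoped RealInnerProductSpace

theorem exists_pos_mul_sq_norm_le_inner_self {E : Type*} [NormedAddCommGroup E]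
    [InnerProductSpace ℝ E] [FiniteDimensional ℝ E] (T : E →L[ℝ] E)
    (hT : ∀ x ≠ 0, 0 < ⟪x, T x⟫) : ∃ m > 0, ∀ x, m * ‖x‖ ^ 2 ≤ ⟪x, T x⟫ := by
  rcases subsingleton_or_nontrivial E with hE | hE
  · exact ⟨1, one_pos, fun x => by simp [Subsingleton.elim x 0]⟩
  obtain ⟨u, hu, hmin⟩ := (isCompact_sphere (0 : E) 1).exists_isMinOn
    (NormedSpace.sphere_nonempty.2 zero_le_one)
    (by fun_prop : Continuous fun x => ⟪x, T x⟫).continuousOn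
  refine ⟨⟪u, T u⟫, hT u (Metric.ne_of_mem_sphere hu one_ne_zero), fun x => ?_⟩
  rcases eq_or_ne x 0 with rfl | hx
  · simp
  have hx' : ‖x‖ ≠ 0 := norm_ne_zero_iff.2 hx
  obtain ⟨v, hv, hxv⟩ : ∃ v ∈ Metric.sphere (0 : E) 1, ‖x‖ • v = x :=
    ⟨‖x‖⁻¹ • x, by simp [norm_smul, hx'], by simp [smul_smul, hx']⟩
  calc ⟪u, T u⟫ * ‖x‖ ^ 2 ≤ ⟪v, T v⟫ * ‖x‖ ^ 2 := by gcongr; exact hmin hv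
    _ = ⟪‖x‖ • v, T (‖x‖ • v)⟫ := by
      rw [map_smul, inner_smul_left, inner_smul_right, RCLike.conj_to_real]; ring
    _ = ⟪x, T x⟫ := by rw [hxv]

theorem Matrix.IsSymm.two_mul_dotProduct_mulVec_mulVec_of_lyapunov {ι R : Type*} [Fintype ι]
    [CommRing R] {A P Q : Matrix ι ι R} (hP : P.IsSymm) (hlyap : P * A + Aᵀ * P = -Q)
    (x : ι → R) : 2 * (x ⬝ᵥ P *ᵥ A *ᵥ x) = -(x ⬝ᵥ Q *ᵥ x) := by
  have h := congrArg (fun M => x ⬝ᵥ M *ᵥ x) hlyap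
  simp only [add_mulVec, neg_mulVec, dotProduct_add, dotProduct_neg, ← mulVec_mulVec] at h
  have hsymm : x ⬝ᵥ Aᵀ *ᵥ P *ᵥ x = x ⬝ᵥ P *ᵥ A *ᵥ x := by
    rw [dotProduct_mulVec, vecMul_transpose, dotProduct_mulVec, ← mulVec_transpose, hP.eq,
      dotProduct_comm]
  rw [← h, hsymm, two_mul]

theorem quadratic_lyapunov_local_decrease_general {n : ℕ}
    (A P Q : Matrix (Fin n) (Fin n) ℝ)
    (hPsymm : P.IsSymm)
    (hPpos : ∀ x : EuclideanSpace ℝ (Fin n), x ≠ 0 → 0 < dotProduct x (P.mulVec x))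
    (hQpos : ∀ x : EuclideanSpace ℝ (Fin n), x ≠ 0 → 0 < dotProduct x (Q.mulVec x))
    (hlyap : P * A + Aᵀ * P = -Q)
    (g : EuclideanSpace ℝ (Fin n) → EuclideanSpace ℝ (Fin n))
    (hsmall : ∀ ε > (0 : ℝ), ∃ δ > (0 : ℝ),
        ∀ x : EuclideanSpace ℝ (Fin n), ‖x‖ < δ → ‖g x‖ ≤ ε * ‖x‖) :
    ∃ c > (0 : ℝ), ∀ x : EuclideanSpace ℝ (Fin n), x ≠ 0 →
      dotProduct x (P.mulVec x) ≤ c →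
      2 * dotProduct x (P.mulVec (A.mulVec x + fun i => g x i)) < 0 := by
  set T := toEuclideanCLM (𝕜 := ℝ) P
  obtain ⟨mP, hmP, hPbound⟩ := exists_pos_mul_sq_norm_le_inner_self T
    (by simpa only [T, inner_toEuclideanCLM] using hPpos)
  obtain ⟨mQ, hmQ, hQbound⟩ := exists_pos_mul_sq_norm_le_inner_self (toEuclideanCLM (𝕜 := ℝ) Q)
    (by simpa only [inner_toEuclideanCLM] using hQpos)
  set ε := mQ / (2 * ‖T‖ + 1)
  have hε : 2 * ‖T‖ * ε < mQ := by
    rw [mul_div_assoc', div_lt_iff₀ (by positivity)]; nlinarith [norm_nonneg T]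
  obtain ⟨δ, hδ, hgδ⟩ := hsmall ε (by positivity)
  refine ⟨mP * (δ / 2) ^ 2, by positivity, fun x hx hxc => ?_⟩
  have hxδ : ‖x‖ < δ := by
    have : mP * ‖x‖ ^ 2 ≤ mP * (δ / 2) ^ 2 := (hPbound x).trans (by rwa [inner_toEuclideanCLM])
    have := (pow_le_pow_iff_left₀ (norm_nonneg x) (by positivity) two_ne_zero).1
      (le_of_mul_le_mul_left this hmP)
    linarith
  have hQx := hQbound x
  have hcross : ⟪x, T (g x)⟫ ≤ ‖x‖ * (‖T‖ * (ε * ‖x‖)) :=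
    (real_inner_le_norm _ _).trans <| by
      gcongr; exact (T.le_opNorm _).trans (by gcongr; exact hgδ x hxδ)
  rw [inner_toEuclideanCLM] at hQx hcross
  rw [mulVec_add, dotProduct_add, mul_add,
    hPsymm.two_mul_dotProduct_mulVec_mulVec_of_lyapunov hlyap]
  calc -(x ⬝ᵥ Q *ᵥ x) + 2 * (x ⬝ᵥ P *ᵥ g x)
      ≤ -(mQ * ‖x‖ ^ 2) + 2 * (‖x‖ * (‖T‖ * (ε * ‖x‖))) := by gcongr
    _ = -(mQ - 2 * ‖T‖ * ε) * ‖x‖ ^ 2 := by ring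
    _ < 0 := mul_neg_of_neg_of_pos (by linarith) (pow_pos (norm_pos_iff.2 hx) 2)

theorem quadratic_lyapunov_local_decrease {n : ℕ}
    (A P Q : Matrix (Fin n) (Fin n) ℝ)
    (hPsymm : P.IsSymm) (hQsymm : Q.IsSymm)
    (hPpos : ∀ x : EuclideanSpace ℝ (Fin n), x ≠ 0 → 0 < dotProduct x (P.mulVec x))
    (hQpos : ∀ x : EuclideanSpace ℝ (Fin n), x ≠ 0 → 0 < dotProduct x (Q.mulVec x))
    (hlyap : P * A + Aᵀ * P = -Q)
    (g : EuclideanSpace ℝ (Fin n) → EuclideanSpace ℝ (Fin n))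
    (hg : Continuous g)
    (hsmall : ∀ ε > (0 : ℝ), ∃ δ > (0 : ℝ),
        ∀ x : EuclideanSpace ℝ (Fin n), ‖x‖ < δ → ‖g x‖ ≤ ε * ‖x‖) :
    ∃ c > (0 : ℝ), ∀ x : EuclideanSpace ℝ (Fin n), x ≠ 0 →
      dotProduct x (P.mulVec x) ≤ c →
      2 * dotProduct x (P.mulVec (A.mulVec x + fun i => g x i)) < 0 :=
  quadratic_lyapunov_local_decrease_general A P Q hPsymm hPpos hQpos hlyap g hsmall
end

section
/- Let g : ℝ → ℝ be differentiable on [0, ∞), let c₁ < c₂ be real numbers and β > 0, and suppose that for every t ≥ 0 with c₁ ≤ g(t) ≤ c₂ one has g′(t) ≤ −β. If g(0) ≤ c₂, then there exists T with 0 ≤ T ≤ (c₂ − c₁)/β such that g(t) ≤ c₁ for all t ≥ T; i.e., once the function enters the sublevel set {g ≤ c₁} it remains there for all later times. -/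
open Set

theorem finite_time_entry_and_invariance_lower_sublevel (g g' : ℝ → ℝ)
    (hg : ∀ t ≥ (0 : ℝ), HasDerivAt g (g' t) t)
    (c₁ c₂ β : ℝ) (hc : c₁ < c₂) (hβ : 0 < β)
    (hdecr : ∀ t ≥ (0 : ℝ), c₁ ≤ g t → g t ≤ c₂ → g' t ≤ -β)
    (h0 : g 0 ≤ c₂) :
    ∃ T : ℝ, 0 ≤ T ∧ T ≤ (c₂ - c₁) / β ∧ ∀ t ≥ T, g t ≤ c₁ := by
  have hgc : ∀ s : ℝ, 0 ≤ s → ContinuousOn g (Ici s) := by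
    intro s hs x hx
    exact ((hg x (hs.trans hx)).continuousAt).continuousWithinAt
  -- invariance of sublevel sets {g ≤ c} for c₁ ≤ c ≤ c₂
  have inv : ∀ s : ℝ, 0 ≤ s → ∀ c : ℝ, c₁ ≤ c → c ≤ c₂ → g s ≤ c →
      ∀ t ≥ s, g t ≤ c := by
    intro s hs c hc1 hc2 hgs t ht
    have := image_le_of_deriv_right_lt_deriv_boundary (f := g) (f' := g') (a := s) (b := t)
      ((hgc s hs).mono Icc_subset_Ici_self)
      (fun x hx => (hg x (hs.trans hx.1)).hasDerivWithinAt)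
      (B := fun _ => c) (B' := fun _ => 0) hgs (fun x => hasDerivAt_const x c)
      (fun x hx hfx => by
        have hfx' : g x = c := hfx
        have := hdecr x (hs.trans hx.1) (hfx' ▸ hc1) (hfx' ▸ hc2)
        show g' x < 0
        linarith)
    exact this ⟨ht, le_rfl⟩
  set T : ℝ := (c₂ - c₁) / β with hT
  have hTpos : 0 < T := div_pos (by linarith) hβ
  -- for t > T, g t ≤ c₁
  have key : ∀ t : ℝ, T < t → g t ≤ c₁ := by
    intro t htT
    have htpos : 0 < t := hTpos.trans htT
    set ε : ℝ := β - (c₂ - c₁) / t with hε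
    have hεpos : 0 < ε := by
      have : (c₂ - c₁) / t < β := by
        rw [div_lt_iff₀ htpos]
        have : T * β < t * β := by nlinarith
        rw [hT, div_mul_cancel₀ _ (ne_of_gt hβ)] at this
        linarith [this]
      simpa [hε] using sub_pos.2 this
    have hne : c₂ - c₁ ≠ 0 := by linarith
    have h1 : β - ε = (c₂ - c₁) / t := by ring
    have hβε : 0 < β - ε := by rw [h1]; exact div_pos (by linarith) htpos
    have hTe : (c₂ - c₁) / (β - ε) = t := by
      rw [h1]; field_simp
    have hTe' : (β - ε) * t = c₂ - c₁ := by
      rw [div_eq_iff (ne_of_gt hβε)] at hTe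
      linarith [hTe]
    have := image_le_of_deriv_right_lt_deriv_boundary (f := g) (f' := g') (a := 0) (b := t)
      ((hgc 0 le_rfl).mono Icc_subset_Ici_self)
      (fun x hx => (hg x hx.1).hasDerivWithinAt)
      (B := fun x => c₂ - (β - ε) * x) (B' := fun _ => -(β - ε)) (by simpa using h0)
      (fun x => by
        simpa using ((hasDerivAt_id x).const_mul (β - ε)).const_sub c₂)
      (fun x hx hfx => by
        have hfx' : g x = c₂ - (β - ε) * x := hfx
        have hx0 : (0 : ℝ) ≤ x := hx.1
        have hxc2 : g x ≤ c₂ := by rw [hfx']; nlinarith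
        have hxc1 : c₁ ≤ g x := by
          rw [hfx']
          have hxt : x < t := hx.2
          nlinarith
        have := hdecr x hx0 hxc1 hxc2
        show g' x < -(β - ε)
        linarith)
    have hgt : g t ≤ c₂ - (β - ε) * t := this ⟨htpos.le, le_rfl⟩
    linarith
  -- g T ≤ c₁ by continuity from the right
  have hgT : g T ≤ c₁ := by
    have hcont : ContinuousAt g T := (hg T hTpos.le).continuousAt
    have htend : Filter.Tendsto g (nhdsWithin T (Ioi T)) (nhds (g T)) :=
      hcont.continuousWithinAt
    refine le_of_tendsto htend ?_
    filter_upwards [self_mem_nhdsWithin] with x hx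
    exact key x hx
  exact ⟨T, hTpos.le, le_rfl, fun t ht => inv T hTpos.le c₁ le_rfl hc.le hgT t ht⟩
end
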